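/- Let p ≥ 1 and let L be a linear functional on the space of real polynomials such that L(q) = ∫₋₁¹ q(x) dx for every polynomial q of degree ≤ 2p − 1, and L(φ_p²) = 2/p. Then L(φ_{p−1}·φ_{p+1}) = 2/(2p−1), where φ_n denotes the n-th Legendre polynomial. (This evaluates the Lobatto–Legendre quadrature of the product φ_{p−1} φ_{p+1}, whose exact integral is 0.) -/

import Mathlib

open Polynomial intervalIntegral

lemma poly_ftc (f : Polynomial ℝ) :
    ∫ x in (-1:ℝ)..1, (derivative f).eval x = f.eval 1 - f.eval (-1) := by
  refine integral_deriv_eq_sub' (fun x => f.eval x) (funext fun x => f.deriv)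
    (fun x _ => f.differentiableAt) ?_
  exact (f.derivative.continuous_aeval).continuousOn

lemma poly_integrable (f : Polynomial ℝ) :
    IntervalIntegrable (fun x => f.eval x) MeasureTheory.volume (-1:ℝ) 1 :=
  (f.continuous_aeval).intervalIntegrable _ _

lemma poly_ibp (f g : Polynomial ℝ) (h1 : g.eval 1 = 0) (h2 : g.eval (-1) = 0) :
    ∫ x in (-1:ℝ)..1, f.eval x * (derivative g).eval x
      = -∫ x in (-1:ℝ)..1, (derivative f).eval x * g.eval x := by
  have h := poly_ftc (f * g)
  rw [derivative_mul, eval_mul, eval_mul, h1, h2, mul_zero, mul_zero, sub_zero] at h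
  have h' : (∫ x in (-1:ℝ)..1, ((derivative f * g).eval x + (f * derivative g).eval x)) = 0 := by
    simpa using h
  rw [intervalIntegral.integral_add (poly_integrable _) (poly_integrable _)] at h'
  simp only [eval_mul] at h'
  linarith

lemma poly_ibp_iter (n : ℕ) (f g : Polynomial ℝ)
    (h : ∀ k < n, (derivative^[k] g).eval 1 = 0 ∧ (derivative^[k] g).eval (-1) = 0) :
    ∫ x in (-1:ℝ)..1, f.eval x * (derivative^[n] g).eval x
      = (-1:ℝ)^n * ∫ x in (-1:ℝ)..1, (derivative^[n] f).eval x * g.eval x := by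
  induction n generalizing f with
  | zero => simp
  | succ n ih =>
    have hvan := h n (Nat.lt_succ_self n)
    have step : ∫ x in (-1:ℝ)..1, f.eval x * (derivative^[n+1] g).eval x
        = -∫ x in (-1:ℝ)..1, (derivative f).eval x * (derivative^[n] g).eval x := by
      rw [Function.iterate_succ_apply']
      exact poly_ibp f _ hvan.1 hvan.2
    rw [step, ih (derivative f) (fun k hk => h k (hk.trans (Nat.lt_succ_self n))),
      ← Function.iterate_succ_apply]
    ring

lemma van_aux (n k : ℕ) (hk : k < n) :
    (derivative^[k] ((X^2-1:Polynomial ℝ)^n)).eval 1 = 0 ∧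
    (derivative^[k] ((X^2-1:Polynomial ℝ)^n)).eval (-1) = 0 := by
  obtain ⟨q, hq⟩ := pow_sub_dvd_iterate_derivative_pow (X^2-1 : Polynomial ℝ) n k
  rw [hq]
  have hnk : n - k ≠ 0 := Nat.sub_ne_zero_of_lt hk
  constructor <;> simp [eval_pow, zero_pow hnk]

lemma key_ibp (n : ℕ) (f : Polynomial ℝ) :
    ∫ x in (-1:ℝ)..1, f.eval x * (derivative^[n] ((X^2-1:Polynomial ℝ)^n)).eval x
      = (-1:ℝ)^n * ∫ x in (-1:ℝ)..1, (derivative^[n] f).eval x * ((X^2-1:Polynomial ℝ)^n).eval x :=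
  poly_ibp_iter n f _ (fun k hk => van_aux n k hk)

/-- The `n`-th Legendre polynomial, via Rodrigues' formula
`φ_n(x) = (1/(2ⁿ n!)) dⁿ/dxⁿ (x² − 1)ⁿ`. -/
noncomputable def legendre (n : ℕ) : Polynomial ℝ :=
  Polynomial.C (1 / (2 ^ n * n.factorial : ℝ)) *
    (Polynomial.derivative^[n] ((Polynomial.X ^ 2 - 1) ^ n))

lemma R_monic (n : ℕ) : ((X^2-1 : Polynomial ℝ)^n).Monic := by
  have : (X^2 - 1 : Polynomial ℝ) = X^2 - C 1 := by simp
  rw [this]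
  exact (monic_X_pow_sub_C (1:ℝ) two_ne_zero).pow n

lemma R_natDegree (n : ℕ) : ((X^2-1 : Polynomial ℝ)^n).natDegree = 2*n := by
  have : (X^2 - 1 : Polynomial ℝ) = X^2 - C 1 := by simp
  rw [this, natDegree_pow, natDegree_X_pow_sub_C, mul_comm]

lemma legendre_natDegree_le (n : ℕ) : (legendre n).natDegree ≤ n := by
  refine (natDegree_C_mul_le _ _).trans ?_
  refine (natDegree_iterate_derivative _ _).trans ?_
  rw [R_natDegree]; omega

lemma legendre_coeff (n : ℕ) :
    (legendre n).coeff n = (1 / (2 ^ n * n.factorial : ℝ)) * ((2*n).descFactorial n : ℝ) := by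
  rw [legendre, coeff_C_mul, coeff_iterate_derivative]
  have h2n : n + n = 2*n := by ring
  rw [h2n]
  have : ((X^2-1 : Polynomial ℝ)^n).coeff (2*n) = 1 := by
    have := (R_monic n).leadingCoeff
    rwa [leadingCoeff, R_natDegree] at this
  rw [this]; simp [nsmul_eq_mul]

lemma integral_mul_legendre_eq_zero (n : ℕ) (f : Polynomial ℝ) (hf : f.natDegree < n) :
    ∫ x in (-1:ℝ)..1, f.eval x * (legendre n).eval x = 0 := by
  have : ∀ x : ℝ, f.eval x * (legendre n).eval x
      = (1 / (2 ^ n * n.factorial : ℝ)) *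
        (f.eval x * (derivative^[n] ((X^2-1:Polynomial ℝ)^n)).eval x) := by
    intro x; simp [legendre]; ring
  simp_rw [this]
  rw [intervalIntegral.integral_const_mul, key_ibp, iterate_derivative_eq_zero hf]
  simp

lemma R_deriv_id (m : ℕ) :
    derivative (X * (X^2-1:Polynomial ℝ)^(m+1))
      = C (2*(m:ℝ)+3) * (X^2-1)^(m+1) + C (2*(m:ℝ)+2) * (X^2-1)^m := by
  rw [derivative_mul, derivative_X, derivative_pow]
  have h1 : derivative (X^2-1 : Polynomial ℝ) = C 2 * X := by
    rw [derivative_sub, derivative_one, derivative_X_pow]; simp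
  rw [h1, Nat.add_sub_cancel]
  simp only [map_add, map_mul, map_ofNat, map_natCast, C_1, map_one, Nat.cast_add, Nat.cast_one,
    Nat.cast_ofNat]
  ring

lemma K_closed (n : ℕ) :
    ∫ x in (-1:ℝ)..1, ((X^2-1:Polynomial ℝ)^n).eval x
      = (-1:ℝ)^n * 2^(2*n+1) * (n.factorial:ℝ)^2 / ((2*n+1).factorial:ℝ) := by
  induction n with
  | zero => norm_num
  | succ m ih =>
    have hftc := poly_ftc (X * (X^2-1:Polynomial ℝ)^(m+1))
    rw [R_deriv_id] at hftc
    have hz : ((X * (X^2-1:Polynomial ℝ)^(m+1))).eval 1 = 0 ∧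
        ((X * (X^2-1:Polynomial ℝ)^(m+1))).eval (-1) = 0 := by
      constructor <;> simp
    rw [hz.1, hz.2, sub_zero] at hftc
    have hsplit : (∫ x in (-1:ℝ)..1,
        ((C (2*(m:ℝ)+3) * (X^2-1)^(m+1) + C (2*(m:ℝ)+2) * (X^2-1)^m : Polynomial ℝ)).eval x)
      = (2*(m:ℝ)+3) * (∫ x in (-1:ℝ)..1, ((X^2-1:Polynomial ℝ)^(m+1)).eval x)
      + (2*(m:ℝ)+2) * (∫ x in (-1:ℝ)..1, ((X^2-1:Polynomial ℝ)^m).eval x) := by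
      simp only [eval_add, eval_mul, eval_C]
      rw [intervalIntegral.integral_add ((poly_integrable _).const_mul _)
        ((poly_integrable _).const_mul _), intervalIntegral.integral_const_mul,
        intervalIntegral.integral_const_mul]
    rw [hsplit] at hftc
    have h3 : (2*(m:ℝ)+3) ≠ 0 := by positivity
    have heq : (∫ x in (-1:ℝ)..1, ((X^2-1:Polynomial ℝ)^(m+1)).eval x)
        = -(2*(m:ℝ)+2)/(2*(m:ℝ)+3) * (∫ x in (-1:ℝ)..1, ((X^2-1:Polynomial ℝ)^m).eval x) := by
      field_simp at hftc ⊢; linarith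
    rw [heq, ih]
    have hfac1 : ((2*(m+1)+1).factorial : ℝ)
        = (2*(m:ℝ)+3) * (2*(m:ℝ)+2) * ((2*m+1).factorial : ℝ) := by
      have : 2*(m+1)+1 = (2*m+1) + 1 + 1 := by ring
      rw [this, Nat.factorial_succ, Nat.factorial_succ]
      push_cast; ring
    have hfac2 : ((m+1).factorial : ℝ) = ((m:ℝ)+1) * (m.factorial : ℝ) := by
      rw [Nat.factorial_succ]; push_cast; ring
    have hpos1 : ((2*m+1).factorial : ℝ) ≠ 0 := Nat.cast_ne_zero.2 (Nat.factorial_ne_zero _)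
    rw [hfac1, hfac2]
    field_simp
    ring

lemma iterate_derivative_legendre (n : ℕ) :
    derivative^[n] (legendre n) = C ((n.factorial : ℝ) * (legendre n).coeff n) := by
  have hdeg : (derivative^[n] (legendre n)).natDegree ≤ 0 := by
    refine (natDegree_iterate_derivative _ _).trans ?_
    have := legendre_natDegree_le n
    omega
  have := Polynomial.eq_C_of_natDegree_le_zero hdeg
  rw [this, coeff_iterate_derivative, zero_add, Nat.descFactorial_self, nsmul_eq_mul]

lemma integral_legendre_sq (n : ℕ) :
    ∫ x in (-1:ℝ)..1, ((legendre n)^2).eval x = 2/(2*(n:ℝ)+1) := by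
  set c : ℝ := 1 / (2 ^ n * n.factorial : ℝ) with hc
  have hrw : ∀ x : ℝ, ((legendre n)^2).eval x
      = c * ((legendre n).eval x * (derivative^[n] ((X^2-1:Polynomial ℝ)^n)).eval x) := by
    intro x
    rw [pow_two, eval_mul]
    nth_rewrite 2 [legendre]
    rw [eval_mul, eval_C]
    ring
  simp_rw [hrw]
  rw [intervalIntegral.integral_const_mul, key_ibp, iterate_derivative_legendre]
  simp_rw [eval_C]
  rw [intervalIntegral.integral_const_mul, K_closed, legendre_coeff]
  have hdf : ((2*n).descFactorial n : ℝ) * (n.factorial : ℝ) = ((2*n).factorial : ℝ) := by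
    have h := Nat.factorial_mul_descFactorial (show n ≤ 2*n by omega)
    have h2 : 2*n - n = n := by omega
    rw [h2] at h
    rw [← Nat.cast_mul, mul_comm, h]
  have hfac : ((2*n+1).factorial : ℝ) = (2*(n:ℝ)+1) * ((2*n).factorial : ℝ) := by
    rw [Nat.factorial_succ]; push_cast; ring
  have hne1 : (n.factorial : ℝ) ≠ 0 := Nat.cast_ne_zero.2 (Nat.factorial_ne_zero _)
  have hne2 : ((2*n).factorial : ℝ) ≠ 0 := Nat.cast_ne_zero.2 (Nat.factorial_ne_zero _)
  have hne3 : (2*(n:ℝ)+1) ≠ 0 := by positivity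
  have hne4 : (2:ℝ)^n ≠ 0 := by positivity
  rw [hc, hfac]
  field_simp
  rw [← hdf]
  ring_nf
  rw [pow_mul', neg_one_sq, one_pow]
  ring_nf

lemma coeff_identity (m : ℕ) :
    (legendre m).coeff m * (legendre (m+2)).coeff (m+2)
      = (((m:ℝ)+1)*(2*(m:ℝ)+3)/(((2*(m:ℝ)+1))*((m:ℝ)+2))) * ((legendre (m+1)).coeff (m+1))^2 := by
  rw [legendre_coeff, legendre_coeff, legendre_coeff]
  have hdf : ∀ n : ℕ, ((2*n).descFactorial n : ℝ) = ((2*n).factorial : ℝ) / (n.factorial : ℝ) := by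
    intro n
    have h := Nat.factorial_mul_descFactorial (show n ≤ 2*n by omega)
    have h2 : 2*n - n = n := by omega
    rw [h2] at h
    field_simp [Nat.factorial_ne_zero]
    rw [← Nat.cast_mul, mul_comm, h]
  rw [hdf, hdf, hdf]
  have e1 : 2*(m+2) = (2*m+1)+1+1+1 := by ring
  have e2 : 2*(m+1) = (2*m+1)+1 := by ring
  rw [e1, e2]
  simp only [Nat.factorial_succ]
  have hne : ∀ k : ℕ, (k.factorial : ℝ) ≠ 0 := fun k => Nat.cast_ne_zero.2 (Nat.factorial_ne_zero _)
  have h1 : (2:ℝ)^(m+2) = 4 * 2^m := by ring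
  have h2 : (2:ℝ)^(m+1) = 2 * 2^m := by ring
  have h3 : ((2*m+1:ℕ) : ℝ) = 2*(m:ℝ)+1 := by push_cast; ring
  push_cast [h1, h2]
  have hne2 : (2:ℝ)^m ≠ 0 := by positivity
  have p1 : (2*(m:ℝ)+1) ≠ 0 := by positivity
  have p2 : ((m:ℝ)+2) ≠ 0 := by positivity
  field_simp
  ring

theorem stmt_11 (p : ℕ) (hp : 1 ≤ p) (L : Polynomial ℝ →ₗ[ℝ] ℝ)
    (hexact : ∀ q : Polynomial ℝ, q.degree ≤ (2 * p - 1 : ℕ) →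
      L q = ∫ x in (-1 : ℝ)..1, q.eval x)
    (hLp : L (legendre p ^ 2) = 2 / (p : ℝ)) :
    L (legendre (p - 1) * legendre (p + 1)) = 2 / (2 * (p : ℝ) - 1) := by
  obtain ⟨m, rfl⟩ : ∃ m, p = m + 1 := ⟨p - 1, by omega⟩
  simp only [Nat.add_sub_cancel]
  set α : ℝ := ((m:ℝ)+1)*(2*(m:ℝ)+3)/(((2*(m:ℝ)+1))*((m:ℝ)+2)) with hα
  set r : Polynomial ℝ := legendre m * legendre (m+2) - α • (legendre (m+1))^2 with hr
  have hdeg : r.degree ≤ (2 * (m+1) - 1 : ℕ) := by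
    have h21 : (2 * (m+1) - 1 : ℕ) = 2*m+1 := by omega
    rw [h21, degree_le_iff_coeff_zero]
    intro k hk
    have hk' : 2*m+2 ≤ k := by exact_mod_cast Nat.add_one_le_iff.mpr (by exact_mod_cast hk)
    rw [hr, coeff_sub, coeff_smul]
    rcases eq_or_lt_of_le hk' with hk2 | hk2
    · rw [← hk2]
      have hc1 : (legendre m * legendre (m+2)).coeff (2*m+2)
          = (legendre m).coeff m * (legendre (m+2)).coeff (m+2) := by
        have := coeff_mul_add_eq_of_natDegree_le (legendre_natDegree_le m) (legendre_natDegree_le (m+2))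
        rwa [show m + (m+2) = 2*m+2 by ring] at this
      have hc2 : ((legendre (m+1))^2).coeff (2*m+2)
          = ((legendre (m+1)).coeff (m+1))^2 := by
        rw [pow_two, pow_two]
        have := coeff_mul_add_eq_of_natDegree_le (legendre_natDegree_le (m+1)) (legendre_natDegree_le (m+1))
        rwa [show (m+1) + (m+1) = 2*m+2 by ring] at this
      rw [hc1, hc2, coeff_identity, smul_eq_mul, sub_self]
    · have hz1 : (legendre m * legendre (m+2)).coeff k = 0 := by
        apply coeff_eq_zero_of_natDegree_lt
        calc (legendre m * legendre (m+2)).natDegree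
            ≤ (legendre m).natDegree + (legendre (m+2)).natDegree := natDegree_mul_le
          _ ≤ m + (m+2) := add_le_add (legendre_natDegree_le m) (legendre_natDegree_le (m+2))
          _ < k := by omega
      have hz2 : ((legendre (m+1))^2).coeff k = 0 := by
        apply coeff_eq_zero_of_natDegree_lt
        calc ((legendre (m+1))^2).natDegree = (legendre (m+1) * legendre (m+1)).natDegree := by
              rw [pow_two]
          _ ≤ (legendre (m+1)).natDegree + (legendre (m+1)).natDegree := natDegree_mul_le
          _ < k := by have := legendre_natDegree_le (m+1); omega
      rw [hz1, hz2, smul_zero, sub_self]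
  have hint : (∫ x in (-1:ℝ)..1, r.eval x) = -α * (2/(2*(m:ℝ)+3)) := by
    have heval : ∀ x : ℝ, r.eval x = (legendre m).eval x * (legendre (m+2)).eval x
        - α * ((legendre (m+1))^2).eval x := by
      intro x; rw [hr]; simp [eval_smul]
    simp_rw [heval]
    rw [intervalIntegral.integral_sub]
    · rw [integral_mul_legendre_eq_zero (m+2) (legendre m)
        (lt_of_le_of_lt (legendre_natDegree_le m) (by omega))]
      rw [intervalIntegral.integral_const_mul, integral_legendre_sq]
      push_cast
      ring
    · have := poly_integrable (legendre m * legendre (m+2))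
      simpa [eval_mul] using this
    · exact ((poly_integrable ((legendre (m+1))^2)).const_mul α)
  have hLr : L r = -α * (2/(2*(m:ℝ)+3)) := by rw [← hint]; exact hexact r hdeg
  rw [hr, map_sub, map_smul, hLp, smul_eq_mul] at hLr
  have hfin : L (legendre m * legendre (m+2))
      = α * (2 / ((m:ℝ)+1)) - α * (2/(2*(m:ℝ)+3)) := by
    push_cast at hLr
    linarith
  rw [show m + 1 + 1 = m + 2 from rfl, hfin]
  have p1 : (2*(m:ℝ)+1) ≠ 0 := by positivity
  have p2 : ((m:ℝ)+2) ≠ 0 := by positivity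
  have p3 : ((m:ℝ)+1) ≠ 0 := by positivity
  have p4 : (2*(m:ℝ)+3) ≠ 0 := by positivity
  push_cast
  rw [show (2:ℝ)*((m:ℝ)+1)-1 = 2*(m:ℝ)+1 by ring, hα]
  field_simp
  ring
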